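/- There is a continuous map T ↦ S_T from the space of trees on ℕ to the space of pruned binary trees satisfying: (1) if T is ill-founded, then [S_T] contains a nonempty perfect subset of 2^ℕ; and (2) if T is well-founded with |T|_ls = α, then [S_T] is countable and the Cantor–Bendixson rank of S_T equals α. -/

import Mathlib

open Set MeasureTheory Topology

noncomputable section

/-- The space of trees on ℕ: subsets of `ℕ^{<ℕ}` (as characteristic functions, giving the
subspace topology from Cantor space) closed under initial segments. -/
abbrev TreeSpace : Type :=
  {T : List ℕ → Bool // ∀ σ τ : List ℕ, T σ = true → τ <+: σ → T τ = true}

/-- The set of sequences of a tree. -/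
def treeSet (T : TreeSpace) : Set (List ℕ) := {σ | T.1 σ = true}

/-- A set of finite sequences is well-founded if no `x ∈ ℕ^ℕ` has all initial segments in it. -/
def WFTree (A : Set (List ℕ)) : Prop :=
  ¬ ∃ x : ℕ → ℕ, ∀ n : ℕ, (List.ofFn fun i : Fin n => x i) ∈ A

/-- `T_n = {σ : n⌢σ ∈ T}`. -/
def subAt (A : Set (List ℕ)) (n : ℕ) : Set (List ℕ) := {σ | n :: σ ∈ A}

/-- The graph of the limsup rank on well-founded trees: `LsRank T α` holds iff `T` is
well-founded with `|T|_ls = α`, where `|∅|_ls = 0` and for `T ≠ ∅`,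
`|T|_ls = max(sup_n |T_n|_ls, (limsup_n |T_n|_ls) + 1)`,
with `limsup_n γ_n = inf_N sup_{n ≥ N} γ_n`. -/
inductive LsRank : Set (List ℕ) → Ordinal → Prop
  | empty : LsRank ∅ 0
  | node {T : Set (List ℕ)} (hT : T ≠ ∅) {r : ℕ → Ordinal}
      (h : ∀ n, LsRank (subAt T n) (r n)) :
      LsRank T (max (⨆ n, r n) ((⨅ N, ⨆ n, r (N + n)) + 1))

/-- The set of infinite branches of a set of finite binary sequences. -/
def branches (S : Set (List Bool)) : Set (ℕ → Bool) :=
  {x | ∀ n : ℕ, (List.ofFn fun i : Fin n => x i) ∈ S}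

/-- `x` is an isolated point of `C ⊆ 2^ℕ`. -/
def IsIsolatedIn (C : Set (ℕ → Bool)) (x : ℕ → Bool) : Prop :=
  ∃ U : Set (ℕ → Bool), IsOpen U ∧ U ∩ C = {x}

/-- Cantor–Bendixson derivative: the initial segments of non-isolated branches of `S`. -/
def CBDer (S : Set (List Bool)) : Set (List Bool) :=
  {σ | ∃ x, x ∈ branches S ∧ ¬ IsIsolatedIn (branches S) x ∧
    ∃ n : ℕ, σ = List.ofFn fun i : Fin n => x i}

/-- Iterated Cantor–Bendixson derivative `D^α(S)`. -/
noncomputable def CBIter (S : Set (List Bool)) (α : Ordinal) : Set (List Bool) :=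
  Ordinal.limitRecOn (motive := fun _ => Set (List Bool)) α S
    (fun _ P => CBDer P)
    (fun o _ IH => ⋂ (β : Ordinal), ⋂ (_ : β < o), IH β ‹β < o›)

/-- The space of pruned binary trees, as a subspace of the Cantor space of subsets of
`{0,1}^{<ℕ}`. -/
abbrev BinTreeSpace : Type :=
  {S : List Bool → Bool // (∀ σ τ : List Bool, S σ = true → τ <+: σ → S τ = true) ∧
    ∀ σ : List Bool, S σ = true → ∃ b : Bool, S (σ ++ [b]) = true}

/-- The set of sequences of a pruned binary tree. -/
def binSet (S : BinTreeSpace) : Set (List Bool) := {σ | S.1 σ = true}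

/-!
`S_T` is the set of binary words `u` with `decode u ∈ T`, where `decode` reads `u` as a list of
blocks `0ⁿ 1 b`, each standing for the child `n` (the bit `b` is free). A branch of `S_T` is
either `0^∞` (when `T ≠ ∅`) or `0ⁿ 1 b y` with `y` a branch of `S_{T_n}`. These blocks are clopen
copies of `[S_{T_n}]`, so Cantor–Bendixson derivatives are computed blockwise, and `0^∞`
survives to stage `β` iff for every `γ < β` infinitely many blocks survive to stage `γ`: this is
the recursion defining `|T|_ls`. A branch `x` of an ill-founded `T` gives an injection
`encodeBranch x` of the Cantor space into `[S_T]`, so this closed set is uncountable and contains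
a perfect set; in the well-founded case `[S_T]` is countable since its
perfect kernel is empty. For a stage `β ≠ 0`, the tree `D^β(S_T)` consists of the initial
segments of the points of the `β`-th derivative of `[S_T]`, which transfers the rank.
-/

open Filter

universe u

section Sequences

variable {α : Type*}

def initSeg (x : ℕ → α) (n : ℕ) : List α := List.ofFn fun i : Fin n => x i

def prepend (l : List α) (y : ℕ → α) (i : ℕ) : α :=
  if h : i < l.length then l[i] else y (i - l.length)

@[simp] theorem length_initSeg (x : ℕ → α) (n : ℕ) : (initSeg x n).length = n :=
  List.length_ofFn

@[simp] theorem initSeg_zero (x : ℕ → α) : initSeg x 0 = [] := rfl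

@[simp] theorem getElem_initSeg (x : ℕ → α) {n i : ℕ} (h : i < (initSeg x n).length) :
    (initSeg x n)[i] = x i :=
  List.getElem_ofFn ..

theorem initSeg_prefix_initSeg (x : ℕ → α) {m n : ℕ} (h : m ≤ n) : initSeg x m <+: initSeg x n :=
  List.prefix_iff_eq_take.mpr <| List.ext_getElem (by simp [h]) fun i _ _ => by simp

theorem initSeg_eq_initSeg_iff {x y : ℕ → α} {n : ℕ} :
    initSeg y n = initSeg x n ↔ y ∈ PiNat.cylinder x n := by
  simp [PiNat.mem_cylinder_iff, List.ext_getElem_iff]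

theorem initSeg_prepend_add (l : List α) (y : ℕ → α) (m : ℕ) :
    initSeg (prepend l y) (l.length + m) = l ++ initSeg y m := by
  refine List.ext_getElem (by simp) fun i _ _ => ?_
  simp [prepend, List.getElem_append]

theorem prepend_initSeg_drop (x : ℕ → α) (n : ℕ) :
    prepend (initSeg x n) (fun i => x (n + i)) = x := by
  funext i
  simp only [prepend, length_initSeg, getElem_initSeg]
  split_ifs with h
  · rfl
  · rw [Nat.add_sub_cancel' (not_lt.mp h)]

theorem prepend_inj {l l' : List α} {y y' : ℕ → α} (h : l.length = l'.length) :
    prepend l y = prepend l' y' ↔ l = l' ∧ y = y' := by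
  refine ⟨fun he => ?_, fun ⟨hl, hy⟩ => hl ▸ hy ▸ rfl⟩
  have hseg (m : ℕ) : l ++ initSeg y m = l' ++ initSeg y' m := by
    rw [← initSeg_prepend_add, he, h, initSeg_prepend_add]
  refine ⟨by simpa using hseg 0, funext fun i => ?_⟩
  have := congrArg (·[l.length + i]?) (hseg (i + 1))
  simpa [List.getElem?_append_right, h] using this

variable [TopologicalSpace α] [DiscreteTopology α]

theorem nhds_hasBasis_cylinder (x : ℕ → α) : (𝓝 x).HasBasis (fun _ => True) (PiNat.cylinder x) := by
  refine ⟨fun U => ⟨fun hU => ?_, fun ⟨n, _, hn⟩ => ?_⟩⟩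
  · obtain ⟨_, ⟨z, n, rfl⟩, hx, hU⟩ := (PiNat.isTopologicalBasis_cylinders _).mem_nhds_iff.mp hU
    exact ⟨n, trivial, PiNat.mem_cylinder_iff_eq.mp hx ▸ hU⟩
  · exact mem_of_superset ((PiNat.isOpen_cylinder _ x n).mem_nhds (PiNat.self_mem_cylinder x n)) hn

theorem isLocallyConstant_initSeg (n : ℕ) : IsLocallyConstant (initSeg (α := α) · n) :=
  (IsLocallyConstant.iff_exists_open _).mpr fun x =>
    ⟨_, PiNat.isOpen_cylinder _ x n, PiNat.self_mem_cylinder x n,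
      fun _ hy => initSeg_eq_initSeg_iff.mpr hy⟩

theorem isOpenEmbedding_prepend (l : List α) : IsOpenEmbedding (prepend l) := by
  have hcont : Continuous (prepend l) := by
    refine continuous_pi fun i => ?_
    unfold prepend
    split_ifs
    · exact continuous_const
    · exact continuous_apply _
  refine ⟨Function.LeftInverse.isEmbedding (f := fun x i => x (l.length + i)) (fun y => ?_)
    (continuous_pi fun i => continuous_apply _) hcont, ?_⟩
  · funext i; simp [prepend]
  · have : range (prepend l) = (initSeg · l.length) ⁻¹' {l} := by
      ext x
      refine ⟨?_, fun hx => ⟨fun i => x (l.length + i), ?_⟩⟩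
      · rintro ⟨y, rfl⟩
        simpa using initSeg_prepend_add l y 0
      · conv_rhs => rw [← prepend_initSeg_drop x l.length]
        rw [show initSeg x l.length = l from hx]
    rw [this]
    exact isLocallyConstant_initSeg _ _

end Sequences

section Branches

variable {α : Type*}

def IsPrefixClosed (A : Set (List α)) : Prop := ∀ σ τ : List α, σ ∈ A → τ <+: σ → τ ∈ A

def prefixes (Y : Set (ℕ → α)) : Set (List α) := {σ | ∃ x ∈ Y, initSeg x σ.length = σ}

theorem prefixes_eq_empty_iff {Y : Set (ℕ → α)} : prefixes Y = ∅ ↔ Y = ∅ := by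
  simp only [eq_empty_iff_forall_notMem]
  exact ⟨fun h x hx => h [] ⟨x, hx, rfl⟩, fun h σ ⟨x, hx, _⟩ => h x hx⟩

theorem mem_branches_iff {S : Set (List Bool)} {x : ℕ → Bool} :
    x ∈ branches S ↔ ∀ n, initSeg x n ∈ S :=
  Iff.rfl

theorem isClosed_branches (S : Set (List Bool)) : IsClosed (branches S) := by
  rw [show branches S = ⋂ n, (initSeg · n) ⁻¹' S by ext; simp [mem_branches_iff]]
  exact isClosed_iInter fun n => isOpen_compl_iff.mp (isLocallyConstant_initSeg n Sᶜ)

theorem IsPrefixClosed.prepend_mem_branches_iff {S : Set (List Bool)} (hS : IsPrefixClosed S)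
    {l : List Bool} {y : ℕ → Bool} : prepend l y ∈ branches S ↔ ∀ m, l ++ initSeg y m ∈ S := by
  simp only [mem_branches_iff, ← initSeg_prepend_add]
  exact ⟨fun h m => h _, fun h n => hS _ _ (h n)
    (initSeg_prefix_initSeg _ (Nat.le_add_left n l.length))⟩

theorem prefixes_branches_subset (S : Set (List Bool)) : prefixes (branches S) ⊆ S := by
  rintro σ ⟨x, hx, hσ⟩
  exact hσ ▸ hx _

theorem branches_prefixes {Y : Set (ℕ → Bool)} (hY : IsClosed Y) : branches (prefixes Y) = Y := by
  refine Subset.antisymm (fun x hx => ?_) fun x hx n => ⟨x, hx, by simp [initSeg]⟩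
  rw [← hY.closure_eq, mem_closure_iff_nhds_basis (nhds_hasBasis_cylinder x)]
  intro n _
  obtain ⟨y, hy, hyx⟩ := mem_branches_iff.mp hx n
  exact ⟨y, hy, initSeg_eq_initSeg_iff.mp (by simpa using hyx)⟩

theorem prefixes_iInter {ι : Type*} [Nonempty ι] {Y : ι → Set (ℕ → Bool)}
    (hdir : Directed (· ⊇ ·) Y) (hY : ∀ i, IsClosed (Y i)) :
    prefixes (⋂ i, Y i) = ⋂ i, prefixes (Y i) := by
  refine Subset.antisymm (fun σ ⟨x, hx, hσ⟩ => mem_iInter.mpr fun i => ⟨x, mem_iInter.mp hx i, hσ⟩)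
    fun σ hσ => ?_
  have hcyl : IsClosed {x : ℕ → Bool | initSeg x σ.length = σ} :=
    (isLocallyConstant_initSeg σ.length).isClosed_fiber σ
  obtain ⟨x, hx⟩ := IsCompact.nonempty_iInter_of_directed_nonempty_isCompact_isClosed
    (fun i => Y i ∩ {x | initSeg x σ.length = σ})
    (fun i j => (hdir i j).imp fun k hk =>
      ⟨inter_subset_inter_left _ hk.1, inter_subset_inter_left _ hk.2⟩)
    (fun i => mem_iInter.mp hσ i) (fun i => ((hY i).inter hcyl).isCompact)
    fun i => (hY i).inter hcyl
  simp only [mem_iInter, mem_inter_iff] at hx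
  exact ⟨x, mem_iInter.mpr fun i => (hx i).1, (hx (Classical.arbitrary ι)).2⟩

end Branches

section CantorBendixson

variable {X Y : Type*} [TopologicalSpace X] [TopologicalSpace Y]

/-- Unlike in `CantorBendixson.iteratedDerivedSet`, the ordinals may live in any universe, as they
do in `CBIter` and `LsRank`. -/
def derivedIter (C : Set X) (β : Ordinal.{u}) : Set X :=
  Ordinal.limitRecOn β C (fun _ D => relDerivedSet D) fun β _ D => ⋂ γ : Iio β, D γ γ.2

@[simp] theorem derivedIter_zero (C : Set X) : derivedIter.{u} C 0 = C :=
  Ordinal.limitRecOn_zero ..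

@[simp] theorem derivedIter_add_one (C : Set X) (β : Ordinal.{u}) :
    derivedIter C (β + 1) = relDerivedSet (derivedIter C β) :=
  Ordinal.limitRecOn_add_one ..

theorem derivedIter_limit (C : Set X) {β : Ordinal.{u}} (hβ : Order.IsSuccLimit β) :
    derivedIter C β = ⋂ γ : Iio β, derivedIter C γ :=
  Ordinal.limitRecOn_limit _ _ _ _ hβ

theorem derivedIter_antitone (C : Set X) : Antitone (derivedIter.{u} C) := by
  intro γ β hγβ
  induction β using Ordinal.limitRecOn with
  | zero => rw [nonpos_iff_eq_zero.mp hγβ]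
  | add_one β ih =>
    rcases hγβ.lt_or_eq with h | rfl
    · rw [derivedIter_add_one]
      exact relDerivedSet_subset.trans (ih (Order.lt_add_one_iff.mp h))
    · rfl
  | limit β hβ _ =>
    rcases hγβ.lt_or_eq with h | rfl
    · rw [derivedIter_limit C hβ]
      exact iInter_subset (fun γ : Iio β => derivedIter C γ) ⟨γ, h⟩
    · rfl

theorem isClosed_derivedIter [T1Space X] {C : Set X} (hC : IsClosed C) (β : Ordinal.{u}) :
    IsClosed (derivedIter C β) := by
  induction β using Ordinal.limitRecOn with
  | zero => simp [hC]
  | add_one β ih =>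
    rw [derivedIter_add_one, ih.relDerivedSet_eq]
    exact isClosed_derivedSet _
  | limit β hβ ih => simpa [derivedIter_limit C hβ] using isClosed_iInter fun γ : Iio β => ih γ γ.2

theorem Topology.IsOpenEmbedding.preimage_relDerivedSet {e : X → Y} (he : IsOpenEmbedding e)
    (F : Set Y) : e ⁻¹' relDerivedSet F = relDerivedSet (e ⁻¹' F) := by
  ext x
  simp [mem_derivedSet, accPt_iff_frequently, ← he.map_nhds_eq, frequently_map, he.injective.ne_iff]

theorem Topology.IsOpenEmbedding.preimage_derivedIter {e : X → Y} (he : IsOpenEmbedding e)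
    (F : Set Y) (β : Ordinal.{u}) : e ⁻¹' derivedIter F β = derivedIter (e ⁻¹' F) β := by
  induction β using Ordinal.limitRecOn with
  | zero => simp
  | add_one β ih => rw [derivedIter_add_one, derivedIter_add_one, ← ih, he.preimage_relDerivedSet]
  | limit β hβ ih =>
    simp only [derivedIter_limit _ hβ, preimage_iInter]
    exact iInter_congr fun γ => ih γ γ.2

theorem Preperfect.subset_derivedIter {D C : Set X} (hD : Preperfect D) (hDC : D ⊆ C)
    (β : Ordinal.{u}) : D ⊆ derivedIter C β := by
  induction β using Ordinal.limitRecOn with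
  | zero => simpa
  | add_one β ih =>
    rw [derivedIter_add_one, relDerivedSet_apply]
    exact fun x hx => ⟨derivedSet_mono _ _ ih (preperfect_iff_subset_derivedSet.mp hD hx), ih hx⟩
  | limit β hβ ih => simpa [derivedIter_limit C hβ] using fun γ hγ => ih γ hγ

theorem countable_of_derivedIter_eq_empty [SecondCountableTopology X] {C : Set X}
    (hC : IsClosed C) {β : Ordinal.{u}} (hβ : derivedIter C β = ∅) : C.Countable := by
  obtain ⟨V, D, hV, hD, rfl⟩ := exists_countable_union_perfect_of_isClosed hC
  have : D = ∅ := subset_empty_iff.mp <| hβ ▸ hD.2.subset_derivedIter subset_union_right β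
  simpa [this] using hV

end CantorBendixson

section CBIter

theorem mem_relDerivedSet_iff_not_isIsolatedIn {C : Set (ℕ → Bool)} {x : ℕ → Bool} :
    x ∈ relDerivedSet C ↔ x ∈ C ∧ ¬ IsIsolatedIn C x := by
  rw [relDerivedSet_apply, mem_inter_iff, mem_derivedSet, accPt_iff_nhds, and_comm,
    and_congr_right_iff]
  intro hx
  constructor
  · rintro h ⟨U, hU, hUC⟩
    obtain ⟨y, hy, hyx⟩ := h U (hU.mem_nhds (hUC.symm.subset rfl).1)
    exact hyx (hUC.subset hy)
  · intro h U hU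
    by_contra! hUC
    obtain ⟨V, hVU, hV, hxV⟩ := mem_nhds_iff.mp hU
    exact h ⟨V, hV, Subset.antisymm (fun y hy => hUC y ⟨hVU hy.1, hy.2⟩) (by simpa using ⟨hxV, hx⟩)⟩

theorem CBDer_eq_prefixes (S : Set (List Bool)) :
    CBDer S = prefixes (relDerivedSet (branches S)) := by
  ext σ
  simp only [CBDer, prefixes, mem_relDerivedSet_iff_not_isIsolatedIn, and_assoc]
  refine exists_congr fun x => and_congr_right' <| and_congr_right' ⟨?_, fun h => ⟨_, h.symm⟩⟩
  rintro ⟨n, rfl⟩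
  simp [initSeg]

@[simp] theorem CBIter_zero (S : Set (List Bool)) : CBIter.{u} S 0 = S :=
  Ordinal.limitRecOn_zero ..

@[simp] theorem CBIter_add_one (S : Set (List Bool)) (β : Ordinal.{u}) :
    CBIter S (β + 1) = CBDer (CBIter S β) :=
  Ordinal.limitRecOn_add_one ..

theorem CBIter_limit (S : Set (List Bool)) {β : Ordinal.{u}} (hβ : Order.IsSuccLimit β) :
    CBIter S β = ⋂ γ, ⋂ (_ : γ < β), CBIter S γ :=
  Ordinal.limitRecOn_limit _ _ _ _ hβ

theorem branches_iInter {ι : Sort*} (S : ι → Set (List Bool)) :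
    branches (⋂ i, S i) = ⋂ i, branches (S i) := by
  ext x
  simp only [mem_branches_iff, mem_iInter]
  exact forall_comm

theorem branches_CBIter (S : Set (List Bool)) (β : Ordinal.{u}) :
    branches (CBIter S β) = derivedIter (branches S) β := by
  induction β using Ordinal.limitRecOn with
  | zero => simp
  | add_one β ih =>
    have hclosed := (isClosed_derivedIter (isClosed_branches S) β).relDerivedSet_eq ▸
      isClosed_derivedSet (derivedIter (branches S) β)
    rw [CBIter_add_one, derivedIter_add_one, CBDer_eq_prefixes, ih, branches_prefixes hclosed]
  | limit β hβ ih =>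
    simp only [CBIter_limit S hβ, derivedIter_limit _ hβ, branches_iInter, iInter_subtype, mem_Iio]
    exact iInter₂_congr ih

theorem CBIter_eq_prefixes (S : Set (List Bool)) {β : Ordinal.{u}} (hβ : β ≠ 0) :
    CBIter S β = prefixes (derivedIter (branches S) β) := by
  have hsucc (γ : Ordinal.{u}) :
      CBIter S (γ + 1) = prefixes (derivedIter (branches S) (γ + 1)) := by
    rw [CBIter_add_one, CBDer_eq_prefixes, branches_CBIter, derivedIter_add_one]
  rcases Ordinal.zero_or_succ_or_isSuccLimit β with rfl | ⟨γ, rfl⟩ | hlim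
  · exact absurd rfl hβ
  · exact hsucc γ
  -- At a limit stage, compactness turns "extends to a branch of every earlier stage" into
  -- "extends to a branch of stage `β`".
  · refine Subset.antisymm (fun σ hσ => ?_) (branches_CBIter S β ▸ prefixes_branches_subset _)
    have : Nonempty (Iio β) := ⟨⟨0, hlim.bot_lt⟩⟩
    rw [derivedIter_limit _ hlim, prefixes_iInter (Y := fun γ : Iio β => derivedIter _ γ)
      ((derivedIter_antitone _).comp_monotone (Subtype.mono_coe _)).directed_ge
      fun γ => isClosed_derivedIter (isClosed_branches S) γ]
    refine mem_iInter.mpr fun γ => ?_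
    have : σ ∈ CBIter S (γ + 1) := by
      rw [CBIter_limit S hlim] at hσ
      exact mem_iInter₂.mp hσ _ (hlim.add_one_lt γ.2)
    rw [hsucc] at this
    obtain ⟨x, hx, hσx⟩ := this
    exact ⟨x, derivedIter_antitone _ (Order.le_succ _) hx, hσx⟩

theorem CBIter_eq_empty_iff {S : Set (List Bool)} (hS : S.Nonempty → (branches S).Nonempty)
    (β : Ordinal.{u}) : CBIter S β = ∅ ↔ derivedIter (branches S) β = ∅ := by
  rcases eq_or_ne β 0 with rfl | hβ
  · simp only [CBIter_zero, derivedIter_zero, ← not_nonempty_iff_eq_empty]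
    exact ⟨mt fun h => ⟨[], h.some_mem 0⟩, mt hS⟩
  · rw [CBIter_eq_prefixes S hβ, prefixes_eq_empty_iff]

end CBIter

section Coding

def block (n : ℕ) (b : Bool) : List Bool := List.replicate n false ++ [true, b]

/-- Reads a binary word as the list of lengths `n` of its blocks `0ⁿ 1 b`: the bit `b` after each
`1` is skipped, and a final incomplete block `0ⁿ 1` still counts as `n`. -/
def decode : List Bool → List ℕ
  | [] => []
  | [true] => [0]
  | true :: _ :: u => 0 :: decode u
  | false :: u => (decode u).modifyHead (· + 1)

theorem decode_replicate_append (n : ℕ) (u : List Bool) :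
    decode (List.replicate n false ++ u) = (decode u).modifyHead (· + n) := by
  induction n with
  | zero =>
    simp only [List.replicate_zero, List.nil_append]
    cases decode u <;> rfl
  | succ n ih =>
    rw [List.replicate_succ, List.cons_append, decode, ih, List.modifyHead_modifyHead]
    rfl

theorem decode_replicate (n : ℕ) : decode (List.replicate n false) = [] := by
  simpa [decode] using decode_replicate_append n []

theorem decode_block_append (n : ℕ) (b : Bool) (u : List Bool) :
    decode (block n b ++ u) = n :: decode u := by
  simp [block, decode_replicate_append, decode]

theorem decode_append_false (u : List Bool) : decode (u ++ [false]) = decode u := by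
  induction u using decode.induct <;> simp [decode, *]

theorem decode_prefix {u v : List Bool} (h : u <+: v) : decode u <+: decode v := by
  obtain ⟨w, rfl⟩ := h
  induction u using decode.induct with
  | case1 => exact List.nil_prefix
  | case2 =>
    cases w with
    | nil => exact List.prefix_refl _
    | cons c w => simp [decode]
  | case3 b u ih => simpa [decode] using ih
  | case4 u ih =>
    obtain ⟨t, ht⟩ := ih
    simp only [List.cons_append, decode, ← ht]
    cases decode u <;> simp

def codeTree (A : Set (List ℕ)) : Set (List Bool) := {u | decode u ∈ A}

theorem isPrefixClosed_codeTree {A : Set (List ℕ)} (hA : IsPrefixClosed A) :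
    IsPrefixClosed (codeTree A) :=
  fun _ _ hσ hτ => hA _ _ hσ (decode_prefix hτ)

theorem isPrefixClosed_subAt {A : Set (List ℕ)} (hA : IsPrefixClosed A) (n : ℕ) :
    IsPrefixClosed (subAt A n) :=
  fun σ τ hσ hτ => hA (n :: σ) (n :: τ) hσ ((List.prefix_cons_inj n).mpr hτ)

theorem block_append_mem_codeTree_iff {A : Set (List ℕ)} {n : ℕ} {b : Bool} {u : List Bool} :
    block n b ++ u ∈ codeTree A ↔ u ∈ codeTree (subAt A n) := by
  simp [codeTree, subAt, decode_block_append]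

theorem prepend_block_apply_of_lt {n i : ℕ} (h : i < n) (b : Bool) (y : ℕ → Bool) :
    prepend (block n b) y i = false := by
  simp [prepend, block, h, show i < n + 2 by omega]

theorem prepend_block_apply_self (n : ℕ) (b : Bool) (y : ℕ → Bool) :
    prepend (block n b) y n = true := by
  simp [prepend, block]

theorem prepend_block_ne_const (n : ℕ) (b : Bool) (y : ℕ → Bool) :
    prepend (block n b) y ≠ Function.const ℕ false :=
  fun h => by simpa [prepend_block_apply_self] using congrFun h n

theorem eq_const_or_exists_eq_prepend_block (x : ℕ → Bool) :
    x = Function.const ℕ false ∨ ∃ n b y, x = prepend (block n b) y := by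
  by_cases hx : ∃ i, x i = true
  · classical
    set N := Nat.find hx
    refine .inr ⟨N, x (N + 1), fun i => x (N + 2 + i), ?_⟩
    have : initSeg x (N + 2) = block N (x (N + 1)) := by
      refine List.ext_getElem (by simp [block]) fun i hi _ => ?_
      rw [getElem_initSeg]
      simp only [block, List.getElem_append, List.length_replicate, List.getElem_replicate]
      split_ifs with h
      · simpa using Nat.find_min hx h
      · obtain rfl | rfl : i = N ∨ i = N + 1 := by simp at hi; omega
        · simp [N, Nat.find_spec hx]
        · simp
    rw [← this]
    exact (prepend_initSeg_drop x _).symm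
  · exact .inl (funext fun i => by simpa using not_exists.mp hx i)

theorem prepend_block_mem_cylinder_iff {n m : ℕ} {b : Bool} {y : ℕ → Bool} :
    prepend (block n b) y ∈ PiNat.cylinder (Function.const ℕ false) m ↔ m ≤ n := by
  rw [PiNat.mem_cylinder_iff]
  refine ⟨fun h => ?_, fun h i hi => prepend_block_apply_of_lt (hi.trans_le h) b y⟩
  by_contra! hnm
  simpa [prepend_block_apply_self] using h n hnm

theorem const_mem_branches_codeTree_iff {A : Set (List ℕ)} :
    Function.const ℕ false ∈ branches (codeTree A) ↔ [] ∈ A := by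
  simp [mem_branches_iff, codeTree, initSeg, decode_replicate]

theorem IsPrefixClosed.prepend_block_mem_branches_codeTree_iff {A : Set (List ℕ)}
    (hA : IsPrefixClosed A) {n : ℕ} {b : Bool} {y : ℕ → Bool} :
    prepend (block n b) y ∈ branches (codeTree A) ↔ y ∈ branches (codeTree (subAt A n)) := by
  simp only [(isPrefixClosed_codeTree hA).prepend_mem_branches_iff, block_append_mem_codeTree_iff,
    mem_branches_iff]

theorem const_mem_relDerivedSet_iff_not_isIsolatedIn (F : Set (ℕ → Bool)) :
    Function.const ℕ false ∈ relDerivedSet F ↔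
      Function.const ℕ false ∈ F ∧ {n | ∃ b, (prepend (block n b) ⁻¹' F).Nonempty}.Infinite := by
  rw [relDerivedSet_apply, mem_inter_iff, and_comm, mem_derivedSet, accPt_iff_frequently,
    (nhds_hasBasis_cylinder _).frequently_iff, ← Nat.frequently_atTop_iff_infinite,
    frequently_atTop]
  refine and_congr_right' <| forall_congr' fun m => ⟨fun h => ?_, fun h _ => ?_⟩
  · obtain ⟨x, hxm, hx0, hxF⟩ := h trivial
    obtain rfl | ⟨n, b, y, rfl⟩ := eq_const_or_exists_eq_prepend_block x
    · exact absurd rfl hx0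
    · exact ⟨n, prepend_block_mem_cylinder_iff.mp hxm, b, y, hxF⟩
  · obtain ⟨n, hmn, b, y, hyF⟩ := h
    exact ⟨_, prepend_block_mem_cylinder_iff.mpr hmn, prepend_block_ne_const n b y, hyF⟩

theorem eq_empty_iff_const_notMem_and_preimage_prepend_block {F : Set (ℕ → Bool)} :
    F = ∅ ↔ Function.const ℕ false ∉ F ∧ ∀ n b, prepend (block n b) ⁻¹' F = ∅ := by
  refine ⟨fun h => by simp [h], fun ⟨h0, h⟩ => eq_empty_of_forall_notMem fun x hx => ?_⟩
  obtain rfl | ⟨n, b, y, rfl⟩ := eq_const_or_exists_eq_prepend_block x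
  · exact h0 hx
  · exact (h n b).subset hx

variable {A : Set (List ℕ)}

theorem IsPrefixClosed.preimage_prepend_block_derivedIter (hA : IsPrefixClosed A) (n : ℕ)
    (b : Bool) (β : Ordinal.{u}) :
    prepend (block n b) ⁻¹' derivedIter (branches (codeTree A)) β =
      derivedIter (branches (codeTree (subAt A n))) β := by
  rw [(isOpenEmbedding_prepend _).preimage_derivedIter]
  congr 1
  ext y
  exact hA.prepend_block_mem_branches_codeTree_iff

theorem IsPrefixClosed.const_mem_derivedIter_iff (hA : IsPrefixClosed A) (β : Ordinal.{u}) :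
    Function.const ℕ false ∈ derivedIter (branches (codeTree A)) β ↔
      [] ∈ A ∧
        ∀ γ < β, {n | (derivedIter (branches (codeTree (subAt A n))) γ).Nonempty}.Infinite := by
  induction β using Ordinal.limitRecOn with
  | zero => simp [const_mem_branches_codeTree_iff]
  | add_one β ih =>
    simp only [derivedIter_add_one, const_mem_relDerivedSet_iff_not_isIsolatedIn, ih,
      hA.preimage_prepend_block_derivedIter, exists_const, Order.lt_add_one_iff,
      le_iff_lt_or_eq, or_imp, forall_and, forall_eq, and_assoc]
  | limit β hβ ih =>
    simp only [derivedIter_limit _ hβ, mem_iInter, Subtype.forall, mem_Iio]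
    refine ⟨fun h => ⟨((ih 0 hβ.bot_lt).mp (h 0 hβ.bot_lt)).1, fun γ hγ =>
      ((ih _ (hβ.add_one_lt hγ)).mp (h _ (hβ.add_one_lt hγ))).2 γ (lt_add_one γ)⟩,
      fun ⟨h0, h⟩ γ hγ => (ih γ hγ).mpr ⟨h0, fun δ hδ => h δ (hδ.trans hγ)⟩⟩

theorem IsPrefixClosed.derivedIter_eq_empty_iff (hA : IsPrefixClosed A) (β : Ordinal.{u}) :
    derivedIter (branches (codeTree A)) β = ∅ ↔
      ¬ ([] ∈ A ∧
          ∀ γ < β, {n | (derivedIter (branches (codeTree (subAt A n))) γ).Nonempty}.Infinite) ∧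
        ∀ n, derivedIter (branches (codeTree (subAt A n))) β = ∅ := by
  rw [eq_empty_iff_const_notMem_and_preimage_prepend_block, hA.const_mem_derivedIter_iff]
  simp only [hA.preimage_prepend_block_derivedIter, forall_const]

end Coding

section Rank

theorem infinite_setOf_lt_iff_lt_iInf_iSup (r : ℕ → Ordinal.{u}) (γ : Ordinal.{u}) :
    {n | γ < r n}.Infinite ↔ γ < ⨅ N, ⨆ n, r (N + n) := by
  rw [← Nat.frequently_atTop_iff_infinite, frequently_atTop, ← Order.add_one_le_iff,
    le_ciInf_iff (OrderBot.bddBelow _)]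
  refine forall_congr' fun N => ?_
  rw [Order.add_one_le_iff, Ordinal.lt_iSup_iff]
  exact ⟨fun ⟨n, hn, h⟩ => ⟨n - N, by rwa [Nat.add_sub_cancel' hn]⟩,
    fun ⟨n, h⟩ => ⟨N + n, N.le_add_right n, h⟩⟩

theorem LsRank.derivedIter_eq_empty_iff {A : Set (List ℕ)} {α : Ordinal.{u}} (hα : LsRank A α)
    (hA : IsPrefixClosed A) (β : Ordinal.{u}) :
    derivedIter (branches (codeTree A)) β = ∅ ↔ α ≤ β := by
  induction hα generalizing β with
  | empty =>
    have : branches (codeTree ∅) = ∅ := eq_empty_of_forall_notMem fun x hx => hx 0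
    simpa [this] using derivedIter_antitone ∅ (zero_le : 0 ≤ β)
  | @node T hT r _ ih =>
    have ih' (n : ℕ) := ih n (isPrefixClosed_subAt hA n)
    have hne (n : ℕ) (γ : Ordinal.{u}) :
        (derivedIter (branches (codeTree (subAt T n))) γ).Nonempty ↔ γ < r n := by
      rw [nonempty_iff_ne_empty, Ne, ih' n, not_le]
    have hroot : [] ∈ T := hA _ _ (nonempty_iff_ne_empty.mpr hT).some_mem List.nil_prefix
    simp only [hA.derivedIter_eq_empty_iff, hne, infinite_setOf_lt_iff_lt_iInf_iSup, ih',
      forall_lt_iff_le, hroot, true_and, not_le, max_le_iff, Ordinal.iSup_le_iff,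
      Order.add_one_le_iff]
    exact and_comm

end Rank

section IllFounded

/-- The point `0^(x 0) 1 (y 0) 0^(x 1) 1 (y 1) ⋯` of the Cantor space. -/
def encodeBranch (x : ℕ → ℕ) (y : ℕ → Bool) (i : ℕ) : Bool :=
  if h : i < x 0 + 2 then (block (x 0) (y 0))[i]'(by simpa [block] using h)
  else encodeBranch (fun k => x (k + 1)) (fun k => y (k + 1)) (i - (x 0 + 2))
termination_by i

theorem encodeBranch_eq (x : ℕ → ℕ) (y : ℕ → Bool) :
    encodeBranch x y =
      prepend (block (x 0) (y 0)) (encodeBranch (fun k => x (k + 1)) (fun k => y (k + 1))) := by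
  funext i
  rw [encodeBranch]
  simp [prepend, block]

theorem encodeBranch_injective (x : ℕ → ℕ) : Function.Injective (encodeBranch x) := by
  intro y y' h
  funext k
  induction k generalizing x y y' with
  | zero =>
    rw [encodeBranch_eq, encodeBranch_eq x y', prepend_inj (by simp [block])] at h
    simpa [block] using h.1
  | succ k ih =>
    rw [encodeBranch_eq, encodeBranch_eq x y', prepend_inj (by simp [block])] at h
    exact ih _ h.2

theorem IsPrefixClosed.encodeBranch_mem_branches_codeTree {A : Set (List ℕ)} (hA : IsPrefixClosed A)
    {x : ℕ → ℕ} (hx : ∀ n, initSeg x n ∈ A) (y : ℕ → Bool) :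
    encodeBranch x y ∈ branches (codeTree A) := by
  rw [mem_branches_iff]
  intro m
  induction m using Nat.strong_induction_on generalizing A x y with
  | _ m ih =>
  have hx' (n : ℕ) : initSeg (fun k => x (k + 1)) n ∈ subAt A (x 0) := by
    simpa [subAt, initSeg, List.ofFn_succ] using hx (n + 1)
  rw [encodeBranch_eq]
  obtain hm | ⟨k, rfl⟩ : m < (block (x 0) (y 0)).length ∨ ∃ k, m = (block (x 0) (y 0)).length + k :=
    (lt_or_ge m _).imp_right Nat.exists_eq_add_of_le
  · refine isPrefixClosed_codeTree hA _ _ ?_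
      (initSeg_prefix_initSeg (n := (block (x 0) (y 0)).length + 0) _ hm.le)
    rw [initSeg_prepend_add, initSeg_zero, block_append_mem_codeTree_iff]
    exact hx' 0
  · rw [initSeg_prepend_add, block_append_mem_codeTree_iff]
    exact ih k (by simp [block]) (isPrefixClosed_subAt hA _) hx' _

theorem not_countable_nat_to_bool : ¬ Countable (ℕ → Bool) := by
  rw [← Cardinal.mk_le_aleph0_iff, ← Cardinal.power_def, Cardinal.mk_bool, Cardinal.mk_nat, not_le]
  exact Cardinal.cantor _

theorem not_countable_branches_codeTree {A : Set (List ℕ)} (hA : IsPrefixClosed A) {x : ℕ → ℕ}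
    (hx : ∀ n, initSeg x n ∈ A) : ¬ (branches (codeTree A)).Countable := fun h =>
  not_countable_nat_to_bool <| countable_univ_iff.mp <|
    countable_of_injective_of_countable_image (encodeBranch_injective x).injOn <| by
      rw [image_univ]
      exact h.mono (range_subset_iff.mpr (hA.encodeBranch_mem_branches_codeTree hx))

end IllFounded

def codeTreeMap (T : TreeSpace) : BinTreeSpace :=
  ⟨fun u => T.1 (decode u), isPrefixClosed_codeTree T.2,
    fun σ hσ => ⟨false, show T.1 _ = true by rwa [decode_append_false]⟩⟩

theorem continuous_codeTreeMap : Continuous codeTreeMap :=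
  continuous_induced_rng.mpr <|
    continuous_pi fun u => (continuous_apply (decode u)).comp continuous_subtype_val

theorem IsPrefixClosed.branches_codeTree_nonempty {A : Set (List ℕ)} (hA : IsPrefixClosed A)
    (h : (codeTree A).Nonempty) : (branches (codeTree A)).Nonempty :=
  ⟨_, const_mem_branches_codeTree_iff.mpr (hA _ _ h.some_mem List.nil_prefix)⟩

/-- There is a continuous map `T ↦ S_T` from trees on ℕ to pruned binary trees such that:
if `T` is ill-founded then `[S_T]` contains a nonempty perfect set; and if `T` is
well-founded with `|T|_ls = α` then `[S_T]` is countable and the Cantor–Bendixson rank of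
`S_T` is `α`. -/
theorem exists_continuous_tree_to_pruned_CB :
    ∃ Φ : TreeSpace → BinTreeSpace, Continuous Φ ∧ ∀ T : TreeSpace,
      (¬ WFTree (treeSet T) →
        ∃ P : Set (ℕ → Bool), P.Nonempty ∧ Perfect P ∧ P ⊆ branches (binSet (Φ T))) ∧
      (WFTree (treeSet T) → ∀ α : Ordinal, LsRank (treeSet T) α →
        (branches (binSet (Φ T))).Countable ∧
        IsLeast {β : Ordinal | CBIter (binSet (Φ T)) β = ∅} α) := by
  refine ⟨codeTreeMap, continuous_codeTreeMap, fun T => ⟨fun hT => ?_, fun _ α hα => ?_⟩⟩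
  · obtain ⟨x, hx⟩ := not_not.mp hT
    obtain ⟨P, hP, hPne, hPS⟩ := exists_perfect_nonempty_of_isClosed_of_not_countable
      (isClosed_branches _) (not_countable_branches_codeTree T.2 hx)
    exact ⟨P, hPne, hP, hPS⟩
  · have hD := hα.derivedIter_eq_empty_iff T.2
    have hCB (β : Ordinal) : CBIter (binSet (codeTreeMap T)) β = ∅ ↔ α ≤ β :=
      (CBIter_eq_empty_iff (IsPrefixClosed.branches_codeTree_nonempty T.2) β).trans (hD β)
    exact ⟨countable_of_derivedIter_eq_empty (isClosed_branches _) ((hD α).mpr le_rfl),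
      (hCB α).mpr le_rfl, fun β hβ => (hCB β).mp hβ⟩
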